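/- There is a universal constant C > 0 such that the following holds. Let X be a finite partially ordered set, let ℓ : [0,1]×[0,1] → ℝ≥0 be an L-Lipschitz loss function, let ε > 0 and n ≥ 1 with |X| ≥ max{n, 2}. Then there exists a randomized algorithm M mapping each dataset D ∈ (X×[0,1])^n to a probability distribution over monotone functions f : X → [0,1], such that M is ε-differentially private and for every dataset D, the expected excess empirical risk E_{f∼M(D)}[L_ℓ(f;D)] − min_{g monotone} L_ℓ(g;D) is at most C · L · sqrt(width(X)·log|X|/(εn)). -/

import Mathlib

/-!
Discretize the values to the grid `{0, 1/m, …, 1}` and run the exponential mechanism on the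
monotone grid functions, scored by empirical risk. A monotone map into `{0, …, m}` is determined by
its `m` upper level sets, each the upper closure of an antichain of at most `w = width X` points,
so there are `K ≤ (|X| + 1) ^ ((w + 1) m)` candidates. Changing one data point moves the
difference of the scores of two candidates by at most `2L / n`, so the inverse temperature
`β = εn / (2L)` gives `ε`-DP, and the Gibbs distribution has expected score within
`(log K + 1) / β` of every candidate. Rounding costs `L / m`, and `m ≈ √(εn / (w log |X|))`
balances the two errors. When `w log |X| ≥ εn` (or `L = 0`), always outputting the zero function
already has excess risk at most `L`.
-/

open MeasureTheory

noncomputable section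

/-- The (normalized) empirical risk of `f` on dataset `D` with loss `ℓ`. -/
def empRisk {X : Type*} (ℓ : ℝ → ℝ → ℝ) {n : ℕ} (f : X → ℝ) (D : Fin n → X × ℝ) : ℝ :=
  (1 / (n : ℝ)) * ∑ i, ℓ (f (D i).1) (D i).2

/-- A valid dataset: all labels lie in `[0,1]`. -/
def IsDataset {X : Type*} {n : ℕ} (D : Fin n → X × ℝ) : Prop :=
  ∀ i, (D i).2 ∈ Set.Icc (0 : ℝ) 1

/-- Two (valid) datasets are neighboring if they differ in at most one entry. -/
def NeighborDS {X : Type*} {n : ℕ} (D D' : Fin n → X × ℝ) : Prop :=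
  IsDataset D ∧ IsDataset D' ∧ ∃ i, ∀ j, j ≠ i → D j = D' j

/-- A monotone function on the poset `X` taking values in `[0,1]`. -/
def IsMonotone01 {X : Type*} [PartialOrder X] (f : X → ℝ) : Prop :=
  Monotone f ∧ ∀ x, f x ∈ Set.Icc (0 : ℝ) 1

/-- The optimal empirical risk over all monotone `[0,1]`-valued functions. -/
def optRisk {X : Type*} [PartialOrder X] (ℓ : ℝ → ℝ → ℝ) {n : ℕ} (D : Fin n → X × ℝ) : ℝ :=
  ⨅ g : {g : X → ℝ // IsMonotone01 g}, empRisk ℓ g.1 D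

/-- `(ε, δ)`-differential privacy of a mechanism `M` w.r.t. a neighboring relation. -/
def IsDP {I Ω : Type*} [MeasurableSpace Ω] (Neighbor : I → I → Prop)
    (M : I → Measure Ω) (ε δ : ℝ) : Prop :=
  ∀ D D', Neighbor D D' → ∀ S : Set Ω, MeasurableSet S →
    M D S ≤ ENNReal.ofReal (Real.exp ε) * M D' S + ENNReal.ofReal δ

/-- A loss function `ℓ : [0,1] × [0,1] → ℝ≥0` that is `L`-Lipschitz in its first argument. -/
def IsLipschitzLoss (ℓ : ℝ → ℝ → ℝ) (L : ℝ) : Prop :=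
  (∀ y z : ℝ, y ∈ Set.Icc (0:ℝ) 1 → z ∈ Set.Icc (0:ℝ) 1 → 0 ≤ ℓ y z) ∧
  (∀ y y' z : ℝ, y ∈ Set.Icc (0:ℝ) 1 → y' ∈ Set.Icc (0:ℝ) 1 → z ∈ Set.Icc (0:ℝ) 1 →
    |ℓ y z - ℓ y' z| ≤ L * |y - y'|)

/-- An `R`-distance-based loss function: `ℓ(y,y') = g(|y - y'|)` for a non-decreasing
nonnegative `g` with `g 0 = 0` and `g (1/2) ≥ R`. -/
def IsDistanceBasedLoss (ℓ : ℝ → ℝ → ℝ) (R : ℝ) : Prop :=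
  ∃ g : ℝ → ℝ, MonotoneOn g (Set.Icc (0:ℝ) 1) ∧ (∀ t ∈ Set.Icc (0:ℝ) 1, 0 ≤ g t) ∧
    g 0 = 0 ∧ R ≤ g (1 / 2) ∧
    ∀ y y' : ℝ, y ∈ Set.Icc (0:ℝ) 1 → y' ∈ Set.Icc (0:ℝ) 1 → ℓ y y' = g |y - y'|

/-- The width of a poset: the largest size of an antichain. -/
def posetWidth (X : Type*) [PartialOrder X] : ℕ :=
  sSup {k | ∃ A : Finset X, IsAntichain (· ≤ ·) (A : Set X) ∧ A.card = k}

/-- An isotonic-regression mechanism: on each valid dataset it outputs a probability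
distribution supported on monotone `[0,1]`-valued functions. -/
def IsIsoRegAlg {X : Type*} [PartialOrder X] {n : ℕ}
    (M : (Fin n → X × ℝ) → Measure (X → ℝ)) : Prop :=
  ∀ D : Fin n → X × ℝ, IsDataset D →
    IsProbabilityMeasure (M D) ∧ M D {f | IsMonotone01 f} = 1

open Finset Real

section Gibbs

variable {G : Type*} [Fintype G]

def gibbsWeight (β : ℝ) (q : G → ℝ) (g : G) : ℝ :=
  exp (-(β * q g)) / ∑ g', exp (-(β * q g'))

lemma gibbsWeight_nonneg (β : ℝ) (q : G → ℝ) (g : G) : 0 ≤ gibbsWeight β q g := by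
  unfold gibbsWeight
  positivity

lemma sum_gibbsWeight [Nonempty G] (β : ℝ) (q : G → ℝ) : ∑ g, gibbsWeight β q g = 1 := by
  simp only [gibbsWeight, ← sum_div]
  exact div_self (sum_pos (fun _ _ ↦ exp_pos _) univ_nonempty).ne'

lemma gibbsWeight_le_exp_mul {β Δ : ℝ} (hβ : 0 ≤ β) {q q' : G → ℝ}
    (hq : ∀ g g', (q' g - q g) - (q' g' - q g') ≤ Δ) (g : G) :
    gibbsWeight β q g ≤ exp (β * Δ) * gibbsWeight β q' g := by
  have hZ (q : G → ℝ) : 0 < ∑ g', exp (-(β * q g')) :=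
    sum_pos (fun _ _ ↦ exp_pos _) ⟨g, mem_univ g⟩
  rw [gibbsWeight, gibbsWeight, mul_div_assoc', div_le_div_iff₀ (hZ q) (hZ q'), mul_sum, mul_sum]
  refine sum_le_sum fun g' _ ↦ ?_
  simp only [← exp_add, exp_le_exp]
  nlinarith [mul_le_mul_of_nonneg_left (hq g g') hβ]

/-- Per term `a ≤ exp a` with `a = β (q g - q g₀) - log K`; the right-hand sides then sum to
`exp (-β q g₀)`, which is at most the partition function. -/
lemma sum_gibbsWeight_mul_le {β : ℝ} (hβ : 0 < β) (q : G → ℝ) (g₀ : G) :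
    ∑ g, gibbsWeight β q g * q g ≤ q g₀ + (log (Fintype.card G) + 1) / β := by
  set Z := ∑ g, exp (-(β * q g))
  set K : ℝ := (Fintype.card G : ℝ)
  have hK : 0 < K := by simp only [K]; exact_mod_cast Fintype.card_pos_iff.mpr ⟨g₀⟩
  have hZ₀ : exp (-(β * q g₀)) ≤ Z :=
    single_le_sum (f := fun g ↦ exp (-(β * q g))) (fun g _ ↦ (exp_pos _).le) (mem_univ g₀)
  have hZ : 0 < Z := (exp_pos _).trans_le hZ₀
  have hterm (g : G) :
      (β * (q g - q g₀) - log K) * exp (-(β * q g)) ≤ exp (-(β * q g₀)) / K := by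
    calc _ ≤ exp (β * (q g - q g₀) - log K) * exp (-(β * q g)) := by
          gcongr
          linarith [add_one_le_exp (β * (q g - q g₀) - log K)]
      _ = exp (-(β * q g₀)) / K := by
          rw [exp_sub, exp_log hK, div_mul_eq_mul_div, ← exp_add]
          ring_nf
  have hsum : β * ∑ g, q g * exp (-(β * q g)) - (β * q g₀ + log K) * Z ≤ Z := by
    calc _ = ∑ g, (β * (q g - q g₀) - log K) * exp (-(β * q g)) := by
          rw [mul_sum, mul_sum, ← sum_sub_distrib]
          exact sum_congr rfl fun g _ ↦ by ring
      _ ≤ ∑ _g : G, exp (-(β * q g₀)) / K := sum_le_sum fun g _ ↦ hterm g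
      _ = exp (-(β * q g₀)) := by
          rw [sum_const, card_univ, nsmul_eq_mul, mul_div_cancel₀ _ hK.ne']
      _ ≤ Z := hZ₀
  simp only [gibbsWeight, div_mul_eq_mul_div, ← sum_div]
  rw [div_le_iff₀ hZ, ← mul_le_mul_iff_of_pos_left hβ]
  field_simp
  linarith

end Gibbs

section DiracMixture

variable {G α : Type*} [Fintype G] [MeasurableSpace α]

def diracMixture (w : G → ℝ) (e : G → α) : Measure α :=
  ∑ g, ENNReal.ofReal (w g) • Measure.dirac (e g)

lemma diracMixture_apply (w : G → ℝ) (e : G → α) (S : Set α) :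
    diracMixture w e S = ∑ g, ENNReal.ofReal (w g) * Measure.dirac (e g) S := by
  simp [diracMixture]

lemma diracMixture_apply_eq_one {w : G → ℝ} (hw : ∀ g, 0 ≤ w g) (hw₁ : ∑ g, w g = 1)
    {e : G → α} {S : Set α} (he : ∀ g, e g ∈ S) : diracMixture w e S = 1 := by
  simp only [diracMixture_apply, Measure.dirac_apply_of_mem (he _), mul_one]
  rw [← ENNReal.ofReal_sum_of_nonneg fun g _ ↦ hw g, hw₁, ENNReal.ofReal_one]

lemma diracMixture_apply_le_mul {w w' : G → ℝ} {c : ℝ} (hc : 0 ≤ c) (h : ∀ g, w g ≤ c * w' g)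
    (e : G → α) (S : Set α) :
    diracMixture w e S ≤ ENNReal.ofReal c * diracMixture w' e S := by
  rw [diracMixture_apply, diracMixture_apply, mul_sum]
  refine sum_le_sum fun g _ ↦ ?_
  rw [← mul_assoc, ← ENNReal.ofReal_mul hc]
  exact mul_le_mul_left (ENNReal.ofReal_le_ofReal (h g)) _

lemma integral_diracMixture [MeasurableSingletonClass α] {w : G → ℝ} (hw : ∀ g, 0 ≤ w g)
    (e : G → α) (F : α → ℝ) : ∫ a, F a ∂diracMixture w e = ∑ g, w g * F (e g) := by
  rw [diracMixture, integral_finsetSum_measure fun g _ ↦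
    (integrable_dirac (by simp)).smul_measure ENNReal.ofReal_ne_top]
  simp [integral_smul_measure, integral_dirac, ENNReal.toReal_ofReal (hw _)]

end DiracMixture

section EmpiricalRisk

variable {X : Type*} {ℓ : ℝ → ℝ → ℝ} {L : ℝ}

lemma IsLipschitzLoss.const_nonneg (hℓ : IsLipschitzLoss ℓ L) : 0 ≤ L := by
  have h := hℓ.2 0 1 0 (by norm_num) (by norm_num) (by norm_num)
  norm_num at h
  exact (abs_nonneg _).trans h

lemma IsLipschitzLoss.sub_le (hℓ : IsLipschitzLoss ℓ L) {y y' z c : ℝ}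
    (hy : y ∈ Set.Icc (0 : ℝ) 1) (hy' : y' ∈ Set.Icc (0 : ℝ) 1) (hz : z ∈ Set.Icc (0 : ℝ) 1)
    (hc : |y - y'| ≤ c) : ℓ y z - ℓ y' z ≤ L * c :=
  (le_abs_self _).trans <| (hℓ.2 y y' z hy hy' hz).trans <|
    mul_le_mul_of_nonneg_left hc hℓ.const_nonneg

lemma empRisk_le_add (hℓ : IsLipschitzLoss ℓ L) {n : ℕ} (hn : 0 < n) {D : Fin n → X × ℝ}
    (hD : IsDataset D) {f f' : X → ℝ} (hf : ∀ x, f x ∈ Set.Icc (0 : ℝ) 1) (hf' : ∀ x, f' x ∈ Set.Icc (0 : ℝ) 1)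
    {c : ℝ} (hc : ∀ x, |f x - f' x| ≤ c) :
    empRisk ℓ f D ≤ empRisk ℓ f' D + L * c := by
  have hsum : ∑ i, ℓ (f (D i).1) (D i).2 ≤ ∑ i, ℓ (f' (D i).1) (D i).2 + n * (L * c) := by
    simpa [sum_add_distrib] using sum_le_sum fun i (_ : i ∈ univ) ↦
      le_add_of_sub_left_le (hℓ.sub_le (hf _) (hf' _) (hD i) (hc _))
  rw [empRisk, empRisk, one_div, inv_mul_le_iff₀ (by positivity)]
  exact hsum.trans_eq (by field_simp)

/-- The loss is Lipschitz only in its first argument, so changing a data point can move the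
empirical risk itself arbitrarily; only the difference between two functions is stable. -/
lemma empRisk_sub_sub_le_of_neighborDS (hℓ : IsLipschitzLoss ℓ L) {n : ℕ}
    {D D' : Fin n → X × ℝ} (hDD' : NeighborDS D D') {f f' : X → ℝ}
    (hf : ∀ x, f x ∈ Set.Icc (0 : ℝ) 1) (hf' : ∀ x, f' x ∈ Set.Icc (0 : ℝ) 1) :
    (empRisk ℓ f D' - empRisk ℓ f D) - (empRisk ℓ f' D' - empRisk ℓ f' D) ≤ 2 * L / n := by
  obtain ⟨hD, hD', i, hi⟩ := hDD'
  have hdiff (h : X → ℝ) : empRisk ℓ h D' - empRisk ℓ h D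
      = (ℓ (h (D' i).1) (D' i).2 - ℓ (h (D i).1) (D i).2) / n := by
    rw [empRisk, empRisk, ← mul_sub, ← sum_sub_distrib, sum_eq_single_of_mem i (mem_univ i),
      one_div_mul_eq_div]
    intro j _ hj
    rw [hi j hj, sub_self]
  have hclose : ∀ x, |f x - f' x| ≤ 1 := fun x ↦
    abs_sub_le_iff.mpr ⟨by linarith [(hf x).2, (hf' x).1], by linarith [(hf x).1, (hf' x).2]⟩
  rw [hdiff, hdiff, ← sub_div]
  gcongr
  linarith [hℓ.sub_le (hf (D' i).1) (hf' _) (hD' i) (hclose _),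
    hℓ.sub_le (hf' (D i).1) (hf _) (hD i) ((abs_sub_comm _ _).trans_le (hclose _))]

lemma sub_optRisk_le [PartialOrder X] {n : ℕ} {D : Fin n → X × ℝ} {a δ : ℝ}
    (h : ∀ g, IsMonotone01 g → a ≤ empRisk ℓ g D + δ) : a - optRisk ℓ D ≤ δ := by
  have : Nonempty {g : X → ℝ // IsMonotone01 g} :=
    ⟨⟨fun _ ↦ 0, monotone_const, fun _ ↦ ⟨le_rfl, zero_le_one⟩⟩⟩
  rw [sub_le_comm]
  exact le_ciInf fun g ↦ by linarith [h g.1 g.2]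

end EmpiricalRisk

section Counting

variable {X : Type*} [PartialOrder X]

lemma IsAntichain.card_le_posetWidth [Fintype X] {A : Finset X}
    (hA : IsAntichain (· ≤ ·) (A : Set X)) : #A ≤ posetWidth X :=
  le_csSup ⟨Fintype.card X, by rintro k ⟨B, -, rfl⟩; exact B.card_le_univ⟩ ⟨A, hA, rfl⟩

lemma one_le_posetWidth [Fintype X] [Nonempty X] : 1 ≤ posetWidth X := by
  obtain ⟨x⟩ := ‹Nonempty X›
  simpa using IsAntichain.card_le_posetWidth (A := {x}) (by simp [IsAntichain])

lemma UpperSet.exists_antichain_upperClosure_eq [Finite X] (U : UpperSet X) :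
    ∃ A : Finset X, IsAntichain (· ≤ ·) (A : Set X) ∧ upperClosure (A : Set X) = U := by
  refine ⟨(Set.toFinite {x | Minimal (· ∈ U) x}).toFinset,
    (by simpa using setOfPred_minimal_antichain (· ∈ U)), SetLike.ext fun x ↦ ?_⟩
  simp only [Set.Finite.coe_toFinset, mem_upperClosure, Set.mem_ofPred_eq]
  refine ⟨fun ⟨a, ha, hax⟩ ↦ U.upper hax ha.prop, fun hx ↦ ?_⟩
  obtain ⟨a, hax, ha⟩ := exists_minimal_le_of_wellFoundedLT (· ∈ U) x hx
  exact ⟨a, ha, hax⟩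

lemma card_upperSet_le [Fintype X] [Nonempty X] :
    Nat.card (UpperSet X) ≤ (Fintype.card X + 1) ^ (posetWidth X + 1) := by
  classical
  let S : Finset (Finset X) := {A | IsAntichain (· ≤ ·) (A : Set X)}
  have hsurj : Function.Surjective fun A : S ↦ upperClosure (A.1 : Set X) := fun U ↦ by
    obtain ⟨A, hA, rfl⟩ := U.exists_antichain_upperClosure_eq
    exact ⟨⟨A, by simpa [S] using hA⟩, rfl⟩
  have hS : S ⊆ (range (posetWidth X + 1)).biUnion fun k ↦ powersetCard k univ := fun A hA ↦
    mem_biUnion.mpr ⟨#A, mem_range.mpr (Nat.lt_succ_of_le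
      (IsAntichain.card_le_posetWidth (mem_filter.mp hA).2)), mem_powersetCard_univ.mpr rfl⟩
  calc Nat.card (UpperSet X) ≤ #S := (Nat.card_le_card_of_surjective _ hsurj).trans_eq
        (Nat.card_eq_finsetCard S)
    _ ≤ ∑ k ∈ range (posetWidth X + 1), (Fintype.card X).choose k := by
        simpa using (card_le_card hS).trans card_biUnion_le
    _ ≤ ∑ k ∈ range (posetWidth X + 1), (Fintype.card X + 1) ^ k :=
        sum_le_sum fun k _ ↦ (Nat.choose_le_pow _ k).trans (Nat.pow_le_pow_left (by omega) k)
    _ ≤ (Fintype.card X + 1) ^ (posetWidth X + 1) :=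
        (Nat.geomSum_lt (by simp [Nat.one_le_iff_ne_zero]) fun k hk ↦ mem_range.mp hk).le

lemma card_monotone_fin_le [Finite X] (m : ℕ) :
    Nat.card {g : X → Fin (m + 1) // Monotone g} ≤ Nat.card (UpperSet X) ^ m := by
  let φ : {g : X → Fin (m + 1) // Monotone g} → Fin m → UpperSet X := fun g j ↦
    ⟨{x | (j : ℕ) < g.1 x}, fun _ b hab ha ↦
      show (j : ℕ) < g.1 b from lt_of_lt_of_le ha (g.2 hab)⟩
  have hφ : Function.Injective φ := fun g g' h ↦ Subtype.ext <| funext fun x ↦ Fin.ext <|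
    eq_of_forall_lt_iff fun j ↦ by
      by_cases hj : j < m
      · exact SetLike.ext_iff.mp (congrFun h ⟨j, hj⟩) x
      · have := (g.1 x).is_le
        have := (g'.1 x).is_le
        omega
  calc _ ≤ Nat.card (Fin m → UpperSet X) := Nat.card_le_card_of_injective φ hφ
    _ = _ := by simp [Nat.card_fun]

lemma log_card_monotone_fin_le [Fintype X] (hX : 2 ≤ Fintype.card X) (m : ℕ) :
    log (Nat.card {g : X → Fin (m + 1) // Monotone g}) ≤
      4 * m * (posetWidth X * log (Fintype.card X)) := by
  have : Nonempty X := Fintype.card_pos_iff.mp (by omega)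
  have : Nonempty {g : X → Fin (m + 1) // Monotone g} := ⟨⟨fun _ ↦ 0, monotone_const⟩⟩
  set N := Fintype.card X
  set w := posetWidth X
  have hcard : (Nat.card {g : X → Fin (m + 1) // Monotone g} : ℝ) ≤ (N + 1) ^ ((w + 1) * m) := by
    rw [pow_mul]
    exact_mod_cast (card_monotone_fin_le m).trans (Nat.pow_le_pow_left card_upperSet_le m)
  have hw : (1 : ℝ) ≤ w := by exact_mod_cast one_le_posetWidth
  have hN : (2 : ℝ) ≤ N := by exact_mod_cast hX
  have hlogN : log (N + 1) ≤ 2 * log N :=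
    calc log (N + 1) ≤ log (N ^ 2) := log_le_log (by positivity) (by nlinarith)
      _ = 2 * log N := by rw [log_pow]; norm_num
  calc _ ≤ log ((N + 1) ^ ((w + 1) * m)) := log_le_log (by simp [Nat.card_pos]) hcard
    _ = (w + 1) * m * log (N + 1) := by rw [log_pow]; push_cast; ring
    _ ≤ (2 * w) * m * (2 * log N) := by
        gcongr
        · exact log_nonneg (by linarith)
        · linarith
    _ = _ := by ring

end Counting

section Grid

variable {X : Type*} {m : ℕ}

def gridValue (g : X → Fin (m + 1)) (x : X) : ℝ := (g x : ℕ) / m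

lemma gridValue_mem_Icc (g : X → Fin (m + 1)) (x : X) : gridValue g x ∈ Set.Icc (0 : ℝ) 1 :=
  ⟨by unfold gridValue; positivity,
    div_le_one_of_le₀ (by exact_mod_cast (g x).is_le) (Nat.cast_nonneg _)⟩

lemma monotone_gridValue [Preorder X] {g : X → Fin (m + 1)} (hg : Monotone g) :
    Monotone (gridValue g) := fun _ _ hxy ↦ by
  unfold gridValue
  gcongr
  exact hg hxy

lemma exists_gridValue_near [PartialOrder X] (hm : 0 < m) {f : X → ℝ} (hf : IsMonotone01 f) :
    ∃ g : X → Fin (m + 1), Monotone g ∧ ∀ x, |gridValue g x - f x| ≤ 1 / m := by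
  have hm' : (0 : ℝ) < m := by exact_mod_cast hm
  refine ⟨fun x ↦ ⟨⌊m * f x⌋₊, Nat.lt_succ_of_le <| Nat.floor_le_of_le <|
    mul_le_of_le_one_right hm'.le (hf.2 x).2⟩, fun _ _ hxy ↦ Fin.mk_le_mk.mpr <|
    Nat.floor_le_floor <| by gcongr; exact hf.1 hxy, fun x ↦ ?_⟩
  have hfloor : |(⌊m * f x⌋₊ : ℝ) - m * f x| ≤ 1 := abs_le.mpr
    ⟨by linarith [Nat.lt_floor_add_one ((m : ℝ) * f x)],
      by linarith [Nat.floor_le (mul_nonneg hm'.le (hf.2 x).1)]⟩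
  calc |gridValue _ x - f x| = |((⌊m * f x⌋₊ : ℝ) - m * f x) / m| := by
        simp only [gridValue]
        congr 1
        field_simp
    _ = |(⌊m * f x⌋₊ : ℝ) - m * f x| / m := by rw [abs_div, abs_of_pos hm']
    _ ≤ 1 / m := by gcongr

end Grid

section Mechanisms

variable {X : Type*} [Fintype X] [PartialOrder X] {ℓ : ℝ → ℝ → ℝ} {L : ℝ} {n : ℕ} {ε : ℝ}

lemma exists_private_isoReg_excess_le_lipschitz (hℓ : IsLipschitzLoss ℓ L) (hn : 0 < n)
    (hε : 0 ≤ ε) :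
    ∃ M : (Fin n → X × ℝ) → Measure (X → ℝ), IsIsoRegAlg M ∧ IsDP NeighborDS M ε 0 ∧
      ∀ D, IsDataset D → (∫ f, empRisk ℓ f D ∂M D) - optRisk ℓ D ≤ L := by
  have h₀ : IsMonotone01 (0 : X → ℝ) := ⟨monotone_const, fun _ ↦ ⟨le_rfl, zero_le_one⟩⟩
  refine ⟨fun _ ↦ Measure.dirac 0, fun _ _ ↦ ⟨inferInstance, Measure.dirac_apply_of_mem h₀⟩,
    fun _ _ _ _ _ ↦ ?_, fun D hD ↦ ?_⟩
  · exact (le_mul_of_one_le_left (by simp) (by simpa using one_le_exp hε)).trans le_self_add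
  · rw [integral_dirac]
    refine sub_optRisk_le fun g hg ↦ ?_
    simpa using empRisk_le_add hℓ hn hD h₀.2 hg.2 (c := 1) fun x ↦ by
      simpa [abs_of_nonneg (hg.2 x).1] using (hg.2 x).2

lemma exists_private_isoReg_excess_le_grid (hℓ : IsLipschitzLoss ℓ L) (hL : 0 < L)
    (hn : 0 < n) (hε : 0 < ε) {m : ℕ} (hm : 0 < m) :
    ∃ M : (Fin n → X × ℝ) → Measure (X → ℝ), IsIsoRegAlg M ∧ IsDP NeighborDS M ε 0 ∧
      ∀ D, IsDataset D → (∫ f, empRisk ℓ f D ∂M D) - optRisk ℓ D ≤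
        L / m + 2 * L * (log (Nat.card {g : X → Fin (m + 1) // Monotone g}) + 1) / (ε * n) := by
  classical
  have : Nonempty {g : X → Fin (m + 1) // Monotone g} := ⟨⟨fun _ ↦ 0, monotone_const⟩⟩
  set β := ε * n / (2 * L)
  have hβ : 0 < β := by positivity
  let score (D : Fin n → X × ℝ) (g : {g : X → Fin (m + 1) // Monotone g}) : ℝ :=
    empRisk ℓ (gridValue g.1) D
  refine ⟨fun D ↦ diracMixture (gibbsWeight β (score D)) fun g ↦ gridValue g.1,
    fun D _ ↦ ⟨⟨?_⟩, ?_⟩, fun D D' hDD' S _ ↦ ?_, fun D hD ↦ ?_⟩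
  · exact diracMixture_apply_eq_one (gibbsWeight_nonneg β _) (sum_gibbsWeight β _)
      fun _ ↦ Set.mem_univ _
  · exact diracMixture_apply_eq_one (gibbsWeight_nonneg β _) (sum_gibbsWeight β _)
      fun g ↦ ⟨monotone_gridValue g.2, gridValue_mem_Icc g.1⟩
  · have hw g : gibbsWeight β (score D) g ≤ exp ε * gibbsWeight β (score D') g := by
      have := gibbsWeight_le_exp_mul hβ.le (fun g g' ↦ empRisk_sub_sub_le_of_neighborDS hℓ hDD'
        (gridValue_mem_Icc g.1) (gridValue_mem_Icc g'.1)) g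
      rwa [show β * (2 * L / n) = ε by simp only [β]; field_simp] at this
    exact (diracMixture_apply_le_mul (exp_pos ε).le hw _ S).trans le_self_add
  · rw [integral_diracMixture (gibbsWeight_nonneg β _)]
    refine sub_optRisk_le fun f hf ↦ ?_
    obtain ⟨g, hg, hgf⟩ := exists_gridValue_near hm hf
    calc _ ≤ score D ⟨g, hg⟩ + (log (Fintype.card _) + 1) / β := sum_gibbsWeight_mul_le hβ _ _
      _ ≤ empRisk ℓ f D + L * (1 / m) +
            (log (Nat.card {g : X → Fin (m + 1) // Monotone g}) + 1) / β := by
          rw [Nat.card_eq_fintype_card]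
          gcongr
          exact empRisk_le_add hℓ hn hD (gridValue_mem_Icc g) hf.2 hgf
      _ = _ := by
          simp only [β]
          field_simp
          ring

end Mechanisms

lemma grid_excess_le {L a b k : ℝ} (hL : 0 ≤ L) (ha : 2 / 3 ≤ a) (hb : 0 < b) (hab : a / b < 1)
    (hk : k ≤ 4 * ⌈(√(a / b))⁻¹⌉₊ * a) :
    L / ⌈(√(a / b))⁻¹⌉₊ + 2 * L * (k + 1) / b ≤ 20 * L * √(a / b) := by
  set r := √(a / b)
  set m := ⌈r⁻¹⌉₊
  have hr : 0 < r := sqrt_pos.mpr (by positivity)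
  have hr₁ : r < 1 := (sqrt_lt' one_pos).mpr (by simpa using hab)
  have hrr : r * r = a / b := mul_self_sqrt (by positivity)
  have hm : (0 : ℝ) < m := Nat.cast_pos.mpr (Nat.ceil_pos.mpr (inv_pos.mpr hr))
  have hmr₁ : 1 ≤ m * r :=
    calc 1 = r⁻¹ * r := (inv_mul_cancel₀ hr.ne').symm
      _ ≤ m * r := by gcongr; exact Nat.le_ceil _
  have hmr₂ : m * r ≤ 2 :=
    calc m * r ≤ (r⁻¹ + 1) * r := by gcongr; exact (Nat.ceil_lt_add_one (by positivity)).le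
      _ = 1 + r := by field_simp
      _ ≤ 2 := by linarith
  have hround : L / m ≤ L * r := by
    rw [div_le_iff₀ hm]
    nlinarith
  have hk' : k / b ≤ 8 * r :=
    calc k / b ≤ 4 * m * a / b := by gcongr
      _ = 4 * (m * r) * r := by rw [mul_div_assoc, ← hrr]; ring
      _ ≤ 4 * 2 * r := by gcongr
      _ = 8 * r := by ring
  have hb' : 1 / b ≤ 3 / 2 * r := by
    rw [div_le_iff₀ hb]
    have : a ≤ r * r * b := by rw [hrr, div_mul_cancel₀ _ hb.ne']
    nlinarith
  calc L / m + 2 * L * (k + 1) / b = L / m + 2 * L * (k / b + 1 / b) := by ring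
    _ ≤ L * r + 2 * L * (8 * r + 3 / 2 * r) := by gcongr
    _ = 20 * L * r := by ring

/-- **Baseline exponential mechanism for general posets.** There is a universal constant
`C > 0` such that for any finite poset `X`, any `L`-Lipschitz loss `ℓ`, any `ε > 0` and
`n ≥ 1` with `|X| ≥ max{n,2}`, there is an `ε`-DP isotonic-regression mechanism with
expected excess empirical risk at most `C · L · sqrt(width(X)·log|X| / (εn))`. -/
theorem dp_isotonic_regression_general_poset_baseline :
    ∃ C : ℝ, 0 < C ∧
      ∀ (X : Type) [Fintype X] [PartialOrder X],
        ∀ (ℓ : ℝ → ℝ → ℝ) (L : ℝ), IsLipschitzLoss ℓ L →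
        ∀ (n : ℕ) (ε : ℝ), 0 < ε → 1 ≤ n → max n 2 ≤ Fintype.card X →
        ∃ M : (Fin n → X × ℝ) → Measure (X → ℝ),
          IsIsoRegAlg M ∧
          IsDP NeighborDS M ε 0 ∧
          ∀ D : Fin n → X × ℝ, IsDataset D →
            (∫ f, empRisk ℓ f D ∂(M D)) - optRisk ℓ D ≤
              C * L * Real.sqrt ((posetWidth X : ℝ) * Real.log (Fintype.card X) / (ε * n)) := by
  refine ⟨20, by norm_num, fun X _ _ ℓ L hℓ n ε hε hn hcard ↦ ?_⟩
  have hX : 2 ≤ Fintype.card X := le_of_max_le_right hcard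
  have : Nonempty X := Fintype.card_pos_iff.mp (by omega)
  have hb : 0 < ε * n := by positivity
  set a := (posetWidth X : ℝ) * log (Fintype.card X)
  have ha : 2 / 3 ≤ a := by
    have hw : (1 : ℝ) ≤ posetWidth X := by exact_mod_cast one_le_posetWidth
    have hlog : 2 / 3 ≤ log (Fintype.card X) := le_trans (b := log 2)
      (by linarith [log_two_gt_d9]) (log_le_log two_pos (by exact_mod_cast hX))
    nlinarith
  by_cases h : 0 < L ∧ a / (ε * n) < 1
  · have hm : 0 < ⌈(√(a / (ε * n)))⁻¹⌉₊ :=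
      Nat.ceil_pos.mpr (inv_pos.mpr (sqrt_pos.mpr (div_pos (by linarith) hb)))
    obtain ⟨M, hM, hdp, hexcess⟩ := exists_private_isoReg_excess_le_grid (X := X) hℓ h.1 hn hε hm
    exact ⟨M, hM, hdp, fun D hD ↦ (hexcess D hD).trans
      (grid_excess_le h.1.le ha hb h.2 (log_card_monotone_fin_le hX _))⟩
  · obtain ⟨M, hM, hdp, hexcess⟩ := exists_private_isoReg_excess_le_lipschitz (X := X) hℓ hn hε.le
    refine ⟨M, hM, hdp, fun D hD ↦ (hexcess D hD).trans ?_⟩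
    rcases not_and_or.mp h with hL | hT
    · simp [le_antisymm (not_lt.mp hL) hℓ.const_nonneg]
    · nlinarith [one_le_sqrt.mpr (not_lt.mp hT), hℓ.const_nonneg]
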